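/- Let S be a finite group and let L and L' be subgroups of S such that: L and L' are elementwise conjugate in S; L ≠ L'; L and L' are maximal subgroups of S; and the normal core of L in S and the normal core of L' in S are both trivial. Let n be a positive integer and T a transitive subgroup of Sym(Fin n), and form the wreath product G = S ≀ T = (Fin n → S) ⋊ T. Then: (i) L ≀ T and L' ≀ T are elementwise conjugate in G; (ii) the normal core of L ≀ T in G and the normal core of L' ≀ T in G are both trivial; and (iii) L ≀ T and L' ≀ T are maximal subgroups of G. -/

import Mathlib

/-- The coordinate-permutation action of `Equiv.Perm α` on `α → S`:
`(σ • f) i = f (σ⁻¹ i)`. -/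
def permMulAut (S : Type*) [Group S] (α : Type*) : Equiv.Perm α →* MulAut (α → S) where
  toFun σ :=
    { toFun := fun f => f ∘ σ.symm
      invFun := fun f => f ∘ σ
      left_inv := fun f => by ext i; simp
      right_inv := fun f => by ext i; simp
      map_mul' := fun f g => rfl }
  map_one' := by ext f i; rfl
  map_mul' := fun σ τ => by ext f i; rfl

/-- The wreath product `S ≀ T` for `T` a subgroup of `Equiv.Perm α`, i.e. the semidirect
product `(α → S) ⋊ T` where `T` permutes coordinates. -/
def Wreath (S : Type*) [Group S] {α : Type*} (T : Subgroup (Equiv.Perm α)) : Type _ :=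
  (α → S) ⋊[(permMulAut S α).comp T.subtype] T

instance (S : Type*) [Group S] {α : Type*} (T : Subgroup (Equiv.Perm α)) :
    Group (Wreath S T) :=
  inferInstanceAs (Group ((α → S) ⋊[(permMulAut S α).comp T.subtype] T))

/-- The subgroup `L ≀ T` of `S ≀ T`: pairs `(f, t)` with all values of `f` in `L`. -/
def wreathSub {S : Type*} [Group S] {α : Type*} (L : Subgroup S)
    (T : Subgroup (Equiv.Perm α)) : Subgroup (Wreath S T) where
  carrier := {g : (α → S) ⋊[(permMulAut S α).comp T.subtype] T | ∀ i, g.left i ∈ L}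
  one_mem' := fun i => by
    show (1 : (α → S) ⋊[(permMulAut S α).comp T.subtype] T).left i ∈ L
    simpa using one_mem L
  mul_mem' := by
    intro a b ha hb i
    show (a * b).left i ∈ L
    exact mul_mem (ha i) (hb _)
  inv_mem' := by
    intro a ha i
    show (a⁻¹).left i ∈ L
    exact inv_mem (ha _)

/-!
An element `(f, σ)` of `L ≀ T` is conjugate, by a base element, to one whose only nontrivial
coordinates sit at one point of each `σ`-cycle and are cycle products of `f`; these lie in `L`, so
each can be conjugated into `L'`. This gives elementwise conjugacy.

An element of the core of `L ≀ T` stays in `L ≀ T` under all base conjugations. A nontrivial top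
part would then let a base element supported at one coordinate force `L = S`; with trivial top part
every coordinate lies in the core of `L`, which is trivial.

For maximality, a subgroup `M > L ≀ T` contains the top group, so by transitivity of `T` it meets
all coordinate copies of `S` in the same overgroup of `L`: either `S`, and then `M = S ≀ T`, or `L`,
and then every coordinate of an element of `M` normalizes `L`. But `L` is self-normalizing: it is
maximal and not normal, since a normal `L` equals its trivial core and then `L' = 1 = L`.
-/

open Equiv

namespace Subgroup

variable {S : Type*} [Group S]

lemma normalizer_eq_self_of_isCoatom {L : Subgroup S} (hL : IsCoatom L) (hN : ¬L.Normal) :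
    normalizer (L : Set S) = L :=
  (le_normalizer.lt_or_eq.resolve_left fun h => hN (normalizer_eq_top_iff.mp (hL.2 _ h))).symm

lemma not_normal_of_normalCore_eq_bot {L L' : Subgroup S}
    (hL'L : ∀ k ∈ L', ∃ h ∈ L, IsConj k h) (hne : L ≠ L') (hcore : L.normalCore = ⊥) :
    ¬L.Normal := by
  intro hN
  have hL : L = ⊥ := by rw [← hcore, normalCore_eq_self]
  refine hne (hL.trans (eq_bot_iff.mpr fun k hk => ?_).symm)
  obtain ⟨h, hh, hconj⟩ := hL'L k hk
  rw [hL, mem_bot] at hh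
  exact mem_bot.mpr (isConj_one_left.mp (hh ▸ hconj))

end Subgroup

namespace Equiv.Perm

variable {α : Type*} (σ : Perm α)

noncomputable def cycleRep (i : α) : α :=
  (Quotient.mk (SameCycle.setoid σ) i).out

lemma sameCycle_cycleRep (i : α) : σ.SameCycle (cycleRep σ i) i :=
  Quotient.exact (Quotient.out_eq (Quotient.mk (SameCycle.setoid σ) i))

lemma cycleRep_eq_of_sameCycle {i j : α} (h : σ.SameCycle i j) :
    cycleRep σ i = cycleRep σ j := by
  unfold cycleRep
  rw [Quotient.sound (s := SameCycle.setoid σ) h]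

lemma cycleRep_inv_apply (i : α) : cycleRep σ (σ⁻¹ i) = cycleRep σ i :=
  cycleRep_eq_of_sameCycle σ (sameCycle_symm_apply_left.mpr .rfl)

section cycleIndex

variable [Finite α]

noncomputable def cycleIndex (i : α) : ℕ := by
  classical
  exact Nat.find (sameCycle_cycleRep σ i).exists_nat_pow_eq

lemma pow_cycleIndex_cycleRep (i : α) : (σ ^ cycleIndex σ i) (cycleRep σ i) = i := by
  classical
  unfold cycleIndex
  convert Nat.find_spec (sameCycle_cycleRep σ i).exists_nat_pow_eq

lemma cycleIndex_le {i : α} {k : ℕ} (h : (σ ^ k) (cycleRep σ i) = i) : cycleIndex σ i ≤ k := by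
  classical
  exact Nat.find_le h

lemma cycleIndex_eq_zero {i : α} (h : cycleRep σ i = i) : cycleIndex σ i = 0 :=
  Nat.le_zero.mp (cycleIndex_le σ (by simpa using h))

lemma cycleIndex_eq_succ {i : α} (h : cycleRep σ i ≠ i) :
    cycleIndex σ i = cycleIndex σ (σ⁻¹ i) + 1 := by
  have hpos : cycleIndex σ i ≠ 0 := fun h0 => h (by simpa [h0] using pow_cycleIndex_cycleRep σ i)
  have hle : cycleIndex σ i ≤ cycleIndex σ (σ⁻¹ i) + 1 := by
    refine cycleIndex_le σ ?_
    rw [pow_succ', mul_apply, ← cycleRep_inv_apply, pow_cycleIndex_cycleRep]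
    exact σ.apply_symm_apply i
  have hge : cycleIndex σ (σ⁻¹ i) ≤ cycleIndex σ i - 1 := by
    refine cycleIndex_le σ (σ.injective ?_)
    rw [cycleRep_inv_apply, ← mul_apply, ← pow_succ', Nat.sub_add_cancel
      (Nat.pos_of_ne_zero hpos), pow_cycleIndex_cycleRep]
    exact (σ.apply_symm_apply i).symm
  omega

end cycleIndex

variable {S : Type*} [Group S] (f : α → S)

def pathProd (r : α) : ℕ → S
  | 0 => 1
  | k + 1 => f ((σ ^ (k + 1)) r) * pathProd r k

lemma pathProd_mem {L : Subgroup S} (hf : ∀ i, f i ∈ L) (r : α) (k : ℕ) :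
    pathProd σ f r k ∈ L := by
  induction k with
  | zero => exact one_mem L
  | succ k ih => exact mul_mem (hf _) ih

variable [Finite α]

noncomputable def cyclePathProd (i : α) : S := pathProd σ f (cycleRep σ i) (cycleIndex σ i)

lemma cyclePathProd_of_cycleRep_eq {i : α} (h : cycleRep σ i = i) :
    cyclePathProd σ f i = 1 := by
  simp [cyclePathProd, cycleIndex_eq_zero σ h, pathProd]

lemma cyclePathProd_of_cycleRep_ne {i : α} (h : cycleRep σ i ≠ i) :
    cyclePathProd σ f i = f i * cyclePathProd σ f (σ⁻¹ i) := by
  unfold cyclePathProd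
  rw [cycleIndex_eq_succ σ h, pathProd, ← cycleIndex_eq_succ σ h, pow_cycleIndex_cycleRep,
    cycleRep_inv_apply]

/- Twisting by `g i = a (cycleRep σ i) * (cyclePathProd σ f i)⁻¹` clears every coordinate except
the cycle representatives, where it leaves the conjugate by `a` of a full cycle product of `f`. -/
lemma exists_mul_mul_inv_apply_inv_mem {L L' : Subgroup S}
    (hLL' : ∀ h ∈ L, ∃ k ∈ L', IsConj h k) (hf : ∀ i, f i ∈ L) :
    ∃ g : α → S, ∀ i, g i * f i * (g (σ⁻¹ i))⁻¹ ∈ L' := by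
  have hcycle (i : α) : ∃ a : S, a * (f i * cyclePathProd σ f (σ⁻¹ i)) * a⁻¹ ∈ L' := by
    obtain ⟨k, hk, hconj⟩ := hLL' _ (mul_mem (hf i) (pathProd_mem σ f hf _ _))
    obtain ⟨a, rfl⟩ := isConj_iff.mp hconj
    exact ⟨a, hk⟩
  choose a ha using hcycle
  refine ⟨fun i => a (cycleRep σ i) * (cyclePathProd σ f i)⁻¹, fun i => ?_⟩
  simp only [cycleRep_inv_apply]
  by_cases hi : cycleRep σ i = i
  · rw [cyclePathProd_of_cycleRep_eq σ f hi, hi]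
    convert ha i using 1
    group
  · rw [cyclePathProd_of_cycleRep_ne σ f hi]
    convert one_mem L' using 1
    group

end Equiv.Perm

namespace Wreath

variable {S : Type*} [Group S] {α : Type*} {T : Subgroup (Perm α)}

@[ext]
lemma ext {x y : Wreath S T} (hl : x.left = y.left) (hr : x.right = y.right) : x = y :=
  SemidirectProduct.ext hl hr

@[simp]
lemma mul_left (x y : Wreath S T) :
    (x * y).left = fun i => x.left i * y.left ((x.right : Perm α)⁻¹ i) := rfl

@[simp]
lemma mul_right (x y : Wreath S T) : (x * y).right = x.right * y.right := rfl

@[simp]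
lemma inv_left (x : Wreath S T) :
    x⁻¹.left = fun i => (x.left ((x.right : Perm α) i))⁻¹ := rfl

@[simp]
lemma inv_right (x : Wreath S T) : x⁻¹.right = x.right⁻¹ := rfl

def base : (α → S) →* Wreath S T := SemidirectProduct.inl

def top : T →* Wreath S T := SemidirectProduct.inr

@[simp] lemma base_left (f : α → S) : (base f : Wreath S T).left = f := rfl
@[simp] lemma base_right (f : α → S) : (base f : Wreath S T).right = 1 := rfl
@[simp] lemma top_left (t : T) : (top t : Wreath S T).left = 1 := rfl
@[simp] lemma top_right (t : T) : (top t : Wreath S T).right = t := rfl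

lemma base_mul_top (x : Wreath S T) : base x.left * top x.right = x :=
  SemidirectProduct.inl_left_mul_inr_right x

lemma base_conj_left (g : α → S) (x : Wreath S T) (i : α) :
    (base g * x * (base g)⁻¹).left i = g i * x.left i * (g ((x.right : Perm α)⁻¹ i))⁻¹ := by
  simp

lemma exists_isConj_mem_wreathSub [Finite α] {L L' : Subgroup S}
    (hLL' : ∀ h ∈ L, ∃ k ∈ L', IsConj h k) {x : Wreath S T} (hx : x ∈ wreathSub L T) :
    ∃ x' ∈ wreathSub L' T, IsConj x x' := by
  obtain ⟨g, hg⟩ := Perm.exists_mul_mul_inv_apply_inv_mem (x.right : Perm α) x.left hLL' hx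
  refine ⟨base g * x * (base g)⁻¹, fun i => ?_, isConj_iff.mpr ⟨base g, rfl⟩⟩
  rw [base_conj_left]
  exact hg i

lemma normalCore_wreathSub_eq_bot {L : Subgroup S} (hL : L ≠ ⊤) (hcore : L.normalCore = ⊥) :
    (wreathSub L T).normalCore = ⊥ := by
  classical
  refine (Subgroup.eq_bot_iff_forall _).mpr fun x hx => ?_
  have hconj (g : α → S) (i : α) : g i * x.left i * (g ((x.right : Perm α)⁻¹ i))⁻¹ ∈ L := by
    rw [← base_conj_left]
    exact hx (base g) i
  have hright : x.right = 1 := by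
    by_contra hne
    obtain ⟨i, hi⟩ : ∃ i, (x.right : Perm α).symm i ≠ i := by
      by_contra! hfix
      exact hne (Subtype.ext (inv_eq_one.mp (Perm.ext hfix)))
    refine hL (eq_top_iff.mpr fun s _ => ?_)
    simpa [Pi.mulSingle_eq_of_ne hi] using hconj (Pi.mulSingle i (s * (x.left i)⁻¹)) i
  have hleft (i : α) : x.left i = 1 := by
    have hmem : x.left i ∈ L.normalCore := fun b => by
      simpa [hright] using hconj (fun _ => b) i
    simpa [hcore] using hmem
  exact Wreath.ext (funext hleft) hright

lemma wreathSub_ne_top [Nonempty α] {L : Subgroup S} (hL : L ≠ ⊤) : wreathSub L T ≠ ⊤ := by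
  intro h
  obtain ⟨i⟩ := ‹Nonempty α›
  refine hL (eq_top_iff.mpr fun s _ => ?_)
  have hs : base (fun _ => s) ∈ wreathSub L T := h ▸ Subgroup.mem_top _
  exact hs i

section single

variable [DecidableEq α]

def single (i : α) : S →* Wreath S T := base.comp (MonoidHom.mulSingle (fun _ : α => S) i)

lemma conj_single (x : Wreath S T) (i : α) (s : S) :
    x * single i s * x⁻¹ = single ((x.right : Perm α) i)
      (x.left ((x.right : Perm α) i) * s * (x.left ((x.right : Perm α) i))⁻¹) := by
  ext j
  · rcases eq_or_ne j ((x.right : Perm α) i) with rfl | hj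
    · simp [single]
    · have hj' : (x.right : Perm α).symm j ≠ i := fun h => hj (by rw [← h]; simp)
      simp [single, Pi.mulSingle_eq_of_ne hj, Pi.mulSingle_eq_of_ne hj']
  · simp [single]

lemma single_mem_wreathSub {L : Subgroup S} (i : α) {s : S} (hs : s ∈ L) :
    single i s ∈ wreathSub (T := T) L := by
  intro j
  rcases eq_or_ne j i with rfl | hj
  · simpa [single]
  · simp [single, Pi.mulSingle_eq_of_ne hj]

variable {M : Subgroup (Wreath S T)}

lemma comap_single_le_comap_single (hT : ∀ i j : α, ∃ σ ∈ T, σ i = j)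
    (htop : ∀ t, top t ∈ M) (i j : α) : M.comap (single i) ≤ M.comap (single j) := by
  obtain ⟨σ, hσT, rfl⟩ := hT i j
  intro s hs
  have hconj := mul_mem (mul_mem (htop ⟨σ, hσT⟩) hs) (inv_mem (htop ⟨σ, hσT⟩))
  simpa [conj_single] using hconj

lemma eq_top_of_single_mem_of_top_mem [Finite α] (hsingle : ∀ i s, single i s ∈ M)
    (htop : ∀ t, top t ∈ M) : M = ⊤ := by
  refine eq_top_iff.mpr fun x _ => ?_
  have hbase : x.left ∈ M.comap base :=
    Subgroup.pi_mem_of_mulSingle_mem x.left fun i => hsingle i (x.left i)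
  rw [← base_mul_top x]
  exact mul_mem hbase (htop _)

lemma left_mem_normalizer {L : Subgroup S} (hLM : wreathSub L T ≤ M)
    (hML : ∀ i, M.comap (single i) ≤ L) {x : Wreath S T} (hx : x ∈ M) (i : α) :
    x.left i ∈ Subgroup.normalizer (L : Set S) := by
  have hconj {y : Wreath S T} (hy : y ∈ M) (j : α) {l : S} (hl : l ∈ L) :
      y.left ((y.right : Perm α) j) * l * (y.left ((y.right : Perm α) j))⁻¹ ∈ L := by
    apply hML ((y.right : Perm α) j)
    rw [Subgroup.mem_comap, ← conj_single]
    exact mul_mem (mul_mem hy (hLM (single_mem_wreathSub j hl))) (inv_mem hy)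
  refine Subgroup.mem_normalizer_iff.mpr fun l => ⟨fun hl => ?_, fun hl => ?_⟩
  · simpa using hconj hx ((x.right : Perm α)⁻¹ i) hl
  · simpa [mul_assoc] using hconj (inv_mem hx) i hl

end single

lemma isCoatom_wreathSub [Finite α] [Nonempty α] (hT : ∀ i j : α, ∃ σ ∈ T, σ i = j)
    {L : Subgroup S} (hL : IsCoatom L) (hnorm : Subgroup.normalizer (L : Set S) = L) :
    IsCoatom (wreathSub L T) := by
  classical
  refine ⟨wreathSub_ne_top hL.1, fun M hM => ?_⟩
  have htop (t : T) : top t ∈ M := hM.le fun i => by simp [one_mem]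
  have hLM (i : α) : L ≤ M.comap (single i) := fun s hs => hM.le (single_mem_wreathSub i hs)
  have hcomap := comap_single_le_comap_single hT htop
  obtain ⟨i₀⟩ := ‹Nonempty α›
  rcases hL.le_iff.mp (hLM i₀) with h | h
  · refine eq_top_of_single_mem_of_top_mem (fun i s => ?_) htop
    exact hcomap i₀ i (h ▸ Subgroup.mem_top s)
  · refine absurd (fun x hx i => ?_) hM.not_ge
    rw [← hnorm]
    exact left_mem_normalizer hM.le (fun i => (hcomap i i₀).trans h.le) hx i

end Wreath

theorem wreath_conservation_of_properties_general {S : Type*} [Group S]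
    (L L' : Subgroup S)
    (hEC : (∀ h ∈ L, ∃ k ∈ L', IsConj h k) ∧ (∀ k ∈ L', ∃ h ∈ L, IsConj k h))
    (hne : L ≠ L')
    (hmaxL : IsCoatom L) (hmaxL' : IsCoatom L')
    (hffL : L.normalCore = ⊥) (hffL' : L'.normalCore = ⊥)
    (n : ℕ) (hn : 0 < n) (T : Subgroup (Equiv.Perm (Fin n)))
    (hT : ∀ i j : Fin n, ∃ σ ∈ T, σ i = j) :
    ((∀ h ∈ wreathSub L T, ∃ h' ∈ wreathSub L' T, IsConj h h') ∧
      (∀ h' ∈ wreathSub L' T, ∃ h ∈ wreathSub L T, IsConj h' h)) ∧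
    ((wreathSub L T).normalCore = ⊥ ∧ (wreathSub L' T).normalCore = ⊥) ∧
    (IsCoatom (wreathSub L T) ∧ IsCoatom (wreathSub L' T)) := by
  obtain ⟨hLL', hL'L⟩ := hEC
  have : Nonempty (Fin n) := ⟨⟨0, hn⟩⟩
  have hnormL := Subgroup.normalizer_eq_self_of_isCoatom hmaxL
    (Subgroup.not_normal_of_normalCore_eq_bot hL'L hne hffL)
  have hnormL' := Subgroup.normalizer_eq_self_of_isCoatom hmaxL'
    (Subgroup.not_normal_of_normalCore_eq_bot hLL' hne.symm hffL')
  exact ⟨⟨fun _ hx => Wreath.exists_isConj_mem_wreathSub hLL' hx,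
      fun _ hx => Wreath.exists_isConj_mem_wreathSub hL'L hx⟩,
    ⟨Wreath.normalCore_wreathSub_eq_bot hmaxL.1 hffL,
      Wreath.normalCore_wreathSub_eq_bot hmaxL'.1 hffL'⟩,
    ⟨Wreath.isCoatom_wreathSub hT hmaxL hnormL, Wreath.isCoatom_wreathSub hT hmaxL' hnormL'⟩⟩

/-- Conservation of properties for Type I triples: if `(S, L, L')` is an EC-triple with
`L ≠ L'`, both `L` and `L'` maximal and with trivial normal core, and `T` is a transitive
subgroup of `Sym(Fin n)`, then `L ≀ T` and `L' ≀ T` are elementwise conjugate in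
`G = S ≀ T`, have trivial normal core in `G`, and are maximal subgroups of `G`. -/
theorem wreath_conservation_of_properties {S : Type*} [Group S] [Finite S]
    (L L' : Subgroup S)
    (hEC : (∀ h ∈ L, ∃ k ∈ L', IsConj h k) ∧ (∀ k ∈ L', ∃ h ∈ L, IsConj k h))
    (hne : L ≠ L')
    (hmaxL : IsCoatom L) (hmaxL' : IsCoatom L')
    (hffL : L.normalCore = ⊥) (hffL' : L'.normalCore = ⊥)
    (n : ℕ) (hn : 0 < n) (T : Subgroup (Equiv.Perm (Fin n)))
    (hT : ∀ i j : Fin n, ∃ σ ∈ T, σ i = j) :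
    ((∀ h ∈ wreathSub L T, ∃ h' ∈ wreathSub L' T, IsConj h h') ∧
      (∀ h' ∈ wreathSub L' T, ∃ h ∈ wreathSub L T, IsConj h' h)) ∧
    ((wreathSub L T).normalCore = ⊥ ∧ (wreathSub L' T).normalCore = ⊥) ∧
    (IsCoatom (wreathSub L T) ∧ IsCoatom (wreathSub L' T)) :=
  wreath_conservation_of_properties_general L L' hEC hne hmaxL hmaxL' hffL hffL' n hn T hT
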